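/- For every integer k ≥ 1 there exists a tournament T with mutual-visibility number μ(T) ≥ k. -/

import Mathlib

variable {V : Type*}

/-- `l` is a directed walk from `u` to `v` in the digraph with arc relation `A`. -/
def IsWalk (A : V → V → Prop) (u v : V) (l : List V) : Prop :=
  l.head? = some u ∧ l.getLast? = some v ∧ l.Chain' A

/-- A directed path: a walk with pairwise distinct vertices. -/
def IsDipath (A : V → V → Prop) (u v : V) (l : List V) : Prop :=
  IsWalk A u v l ∧ l.Nodup

/-- The internal vertices of a walk given by its vertex list. -/
def internal (l : List V) : List V := l.tail.dropLast

/-- Directed distance: the least number of arcs of a directed walk from `u` to `v`,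
`⊤` if there is none. -/
noncomputable def ddist (A : V → V → Prop) (u v : V) : ℕ∞ :=
  sInf {n : ℕ∞ | ∃ l : List V, IsWalk A u v l ∧ (l.length : ℕ∞) = n + 1}

/-- `y` is visible from `x` with respect to `S`: some shortest directed `x,y`-walk
has no internal vertex in `S`. -/
def Visible (A : V → V → Prop) (S : Set V) (x y : V) : Prop :=
  ∃ l : List V, IsWalk A x y l ∧ (l.length : ℕ∞) = ddist A x y + 1 ∧
    ∀ w ∈ internal l, w ∉ S

/-- `S` is a mutual-visibility set of the digraph with arc relation `A`. -/
def MutVisSet (A : V → V → Prop) (S : Set V) : Prop :=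
  ∀ x ∈ S, ∀ y ∈ S, x ≠ y → Visible A S x y ∧ Visible A S y x

/-- The mutual-visibility number. -/
noncomputable def mu (A : V → V → Prop) : ℕ :=
  sSup {n : ℕ | ∃ S : Set V, MutVisSet A S ∧ S.ncard = n}

/-- Reachability by a directed path. -/
def Reach (A : V → V → Prop) : V → V → Prop := Relation.ReflTransGen A

/-- A digraph is strongly connected if every vertex reaches every other. -/
def StrongConn (A : V → V → Prop) : Prop := ∀ u v : V, Reach A u v

/-- The strongly connected component containing `v`. -/
def scc (A : V → V → Prop) (v : V) : Set V := {u | Reach A u v ∧ Reach A v u}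

section Visibility

variable {A : V → V → Prop} {u v : V} {l : List V}

lemma isWalk_pair (h : A u v) : IsWalk A u v [u, v] :=
  ⟨rfl, rfl, List.isChain_pair.2 h⟩

lemma isWalk_triple {z : V} (h₁ : A u z) (h₂ : A z v) : IsWalk A u v [u, z, v] :=
  ⟨rfl, rfl, List.isChain_cons_cons.2 ⟨h₁, List.isChain_pair.2 h₂⟩⟩

lemma IsWalk.two_le_length (h : IsWalk A u v l) (huv : u ≠ v) : 2 ≤ l.length := by
  obtain ⟨hu, hv, -⟩ := h
  match l with
  | [] => simp at hu
  | [a] => simp_all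
  | _ :: _ :: _ => simp

lemma IsWalk.three_le_length (h : IsWalk A u v l) (huv : u ≠ v) (hA : ¬ A u v) :
    3 ≤ l.length := by
  obtain ⟨hu, hv, hchain⟩ := h
  match l with
  | [] => simp at hu
  | [a] => simp_all
  | [a, b] =>
    simp only [List.head?_cons, List.getLast?_cons_cons, List.getLast?_singleton,
      Option.some_inj] at hu hv
    subst hu hv
    exact absurd (List.isChain_pair.1 hchain) hA
  | _ :: _ :: _ :: _ => simp

lemma ddist_eq_of_isWalk {n : ℕ} (hl : IsWalk A u v l) (hlen : l.length = n + 1)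
    (hmin : ∀ l', IsWalk A u v l' → n + 1 ≤ l'.length) : ddist A u v = n := by
  refine le_antisymm (sInf_le ⟨l, hl, by simp [hlen]⟩) (le_sInf ?_)
  rintro m ⟨l', hl', hlen'⟩
  induction m using ENat.recTopCoe with
  | top => exact le_top
  | coe m =>
    have : l'.length = m + 1 := by exact_mod_cast hlen'
    have := hmin l' hl'
    exact_mod_cast (by omega : n ≤ m)

lemma visible_of_arc (S : Set V) (huv : u ≠ v) (h : A u v) : Visible A S u v := by
  refine ⟨[u, v], isWalk_pair h, ?_, by simp [internal]⟩
  rw [ddist_eq_of_isWalk (n := 1) (isWalk_pair h) rfl fun _ hl' => hl'.two_le_length huv]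
  rfl

lemma visible_of_arc_arc (S : Set V) {z : V} (huv : u ≠ v) (hA : ¬ A u v)
    (h₁ : A u z) (h₂ : A z v) (hz : z ∉ S) : Visible A S u v := by
  refine ⟨[u, z, v], isWalk_triple h₁ h₂, ?_, by simpa [internal] using hz⟩
  rw [ddist_eq_of_isWalk (n := 2) (isWalk_triple h₁ h₂) rfl
    fun _ hl' => hl'.three_le_length huv hA]
  rfl

lemma MutVisSet.ncard_le_mu [Finite V] {S : Set V} (hS : MutVisSet A S) :
    S.ncard ≤ mu A := by
  refine le_csSup ⟨Nat.card V, ?_⟩ ⟨S, hS, rfl⟩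
  rintro _ ⟨T, -, rfl⟩
  exact Set.ncard_le_card T

end Visibility

section HubTournament

variable (α : Type*) [LinearOrder α]

/-- The hub `inr i` lets every backward pair `inl j, inl i` (`i < j`) of the transitive part
see each other along the path `inl j → inr i → inl i`, which avoids `range inl`. -/
def hubArc : α ⊕ α → α ⊕ α → Prop
  | .inl i, .inl j => i < j
  | .inl i, .inr m => i ≠ m
  | .inr m, .inl i => i = m
  | .inr m, .inr n => m < n

lemma hubArc_irrefl (v : α ⊕ α) : ¬ hubArc α v v := by
  rcases v with i | m <;> simp [hubArc]

lemma hubArc_iff_not (u v : α ⊕ α) (huv : u ≠ v) : hubArc α u v ↔ ¬ hubArc α v u := by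
  rcases u with i | m <;> rcases v with j | n
  · have hij : i ≠ j := fun h => huv (congrArg _ h)
    simpa [hubArc] using lt_iff_le_and_ne.trans (and_iff_left hij)
  · simp [hubArc]
  · simp [hubArc, eq_comm]
  · have hmn : m ≠ n := fun h => huv (congrArg _ h)
    simpa [hubArc] using lt_iff_le_and_ne.trans (and_iff_left hmn)

variable {α}

lemma visible_hubArc_pair {i j : α} (hij : i < j) :
    Visible (hubArc α) (Set.range Sum.inl) (.inl i) (.inl j) ∧
      Visible (hubArc α) (Set.range Sum.inl) (.inl j) (.inl i) := by
  have hne : (Sum.inl i : α ⊕ α) ≠ .inl j := by simpa using hij.ne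
  refine ⟨visible_of_arc _ hne hij, ?_⟩
  exact visible_of_arc_arc _ hne.symm (z := .inr i) (not_lt.2 hij.le) hij.ne'
    rfl (by simp)

lemma mutVisSet_hubArc_range_inl : MutVisSet (hubArc α) (Set.range Sum.inl) := by
  rintro _ ⟨i, rfl⟩ _ ⟨j, rfl⟩ hne
  rcases lt_or_gt_of_ne (fun h => hne (congrArg _ h)) with hij | hji
  · exact visible_hubArc_pair hij
  · exact (visible_hubArc_pair hji).symm

end HubTournament

theorem stmt15_general (k : ℕ) :
    ∃ (V : Type) (_ : Fintype V) (A : V → V → Prop),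
      (∀ v : V, ¬ A v v) ∧
      (∀ u v : V, u ≠ v → (A u v ↔ ¬ A v u)) ∧
      k ≤ mu A := by
  refine ⟨Fin k ⊕ Fin k, inferInstance, hubArc (Fin k), hubArc_irrefl _, hubArc_iff_not _, ?_⟩
  have hcard : (Set.range (Sum.inl : Fin k → Fin k ⊕ Fin k)).ncard = k := by
    rw [Set.ncard_range_of_injective Sum.inl_injective, Nat.card_eq_fintype_card,
      Fintype.card_fin]
  exact hcard.ge.trans mutVisSet_hubArc_range_inl.ncard_le_mu

/-- For every `k ≥ 1` there is a tournament `T` with `μ(T) ≥ k`. -/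
theorem stmt15 (k : ℕ) (hk : 1 ≤ k) :
    ∃ (V : Type) (_ : Fintype V) (A : V → V → Prop),
      (∀ v : V, ¬ A v v) ∧
      (∀ u v : V, u ≠ v → (A u v ↔ ¬ A v u)) ∧
      k ≤ mu A :=
  stmt15_general k
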